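/- arXiv:1012.4661 — 2 statements merged into one kernel-verified Lean document; each statement's English description precedes it below -/
import Mathlib

section
/- The determinant of the Cartan matrix of the cluster-tilted algebra of type IV whose quiver is an oriented cycle of length k with all k spikes present equals 2k − 1, for every k ≥ 3. -/
open Matrix

/-- The Cartan matrix of the cluster-tilted algebra of type IV whose quiver is an
oriented central cycle of length `k` with all `k` spikes present: the first `Fin k`
component indexes the cycle vertices, the second the spike vertices `c_j`
(the spike `c_j` forms an oriented triangle with the cycle vertices `j` and `j+1`). -/
def cartanIV (k : ℕ) [NeZero k] : Matrix (Fin k ⊕ Fin k) (Fin k ⊕ Fin k) ℤ :=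
  Matrix.of fun u v =>
    match u, v with
    | Sum.inl _, Sum.inl _ => 1
    | Sum.inl u, Sum.inr j => if u = j + 1 then 1 else 0
    | Sum.inr j, Sum.inl v => if v = j then 1 else 0
    | Sum.inr j, Sum.inr l => if l = j ∨ l = j - 1 then 1 else 0

private def Jmat (k : ℕ) : Matrix (Fin k) (Fin k) ℤ := Matrix.of fun _ _ => 1

private def Bmat (k : ℕ) [NeZero k] : Matrix (Fin k) (Fin k) ℤ :=
  Matrix.of fun u j => if u = j + 1 then 1 else 0

private def Dmat (k : ℕ) [NeZero k] : Matrix (Fin k) (Fin k) ℤ :=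
  Matrix.of fun j l => if l = j ∨ l = j - 1 then 1 else 0

private def Tmat (k : ℕ) : Matrix (Fin k ⊕ Fin k) (Fin k ⊕ Fin k) ℤ :=
  fromBlocks 0 1 1 0

private def Umat (k : ℕ) : Matrix (Fin k ⊕ Fin k) (Fin k ⊕ Fin k) ℤ :=
  fromBlocks 1 1 0 1

private def Vmat (k : ℕ) : Matrix (Fin k ⊕ Fin k) (Fin k ⊕ Fin k) ℤ :=
  fromBlocks 1 1 1 0

private lemma cartan_blocks (k : ℕ) [NeZero k] :
    cartanIV k = fromBlocks (Jmat k) (Bmat k) 1 (Dmat k) := by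
  ext u v
  cases u <;> cases v <;>
    simp [cartanIV, Jmat, Bmat, Dmat, fromBlocks, one_apply, eq_comm]

private lemma detB (p : ℕ) : (Bmat (p+1)).det = (-1 : ℤ)^p := by
  have h : Bmat (p+1) = ((finRotate (p+1))⁻¹).permMatrix ℤ := by
    ext u j
    simp only [Bmat, of_apply, Equiv.Perm.permMatrix, PEquiv.toMatrix_apply,
      Equiv.toPEquiv_apply, Option.mem_def, Option.some.injEq]
    congr 1
    simp only [eq_iff_iff]
    rw [eq_comm, Equiv.Perm.inv_eq_iff_eq, finRotate_succ_apply, eq_comm]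
  rw [h, det_permutation, Equiv.Perm.sign_inv, sign_finRotate]
  push_cast; ring

private lemma detT (k : ℕ) : (Tmat k).det = (-1 : ℤ)^k := by
  have e1 : Umat k * Tmat k = Vmat k := by
    rw [Tmat, Umat, Vmat, fromBlocks_multiply]; simp
  have e2 : (Umat k).det = 1 := by
    rw [Umat, det_fromBlocks_zero₂₁]; simp
  have e3 : (Vmat k).det = (-1 : ℤ)^k := by
    rw [Vmat, det_fromBlocks_one₁₁]
    simp [det_neg]
  calc (Tmat k).det = (Umat k).det * (Tmat k).det := by rw [e2, one_mul]
    _ = (-1 : ℤ)^k := by rw [← det_mul, e1, e3]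

theorem stmt_12 (k : ℕ) [NeZero k] (hk : 3 ≤ k) :
    (cartanIV k).det = 2 * (k : ℤ) - 1 := by
  obtain ⟨p, rfl⟩ : ∃ p, k = p + 1 := ⟨k - 1, by omega⟩
  have hone : (1 : Fin (p+1)) ≠ 0 := by
    intro h
    have h' := congrArg Fin.val h
    rw [Fin.val_one', Fin.val_zero] at h'
    have : 1 % (p+1) = 1 := Nat.mod_eq_of_lt (by omega)
    omega
  have hll : ∀ l : Fin (p+1), ¬ (l = l + 1) := by
    intro l b
    exact hone (left_eq_add.mp b)
  -- J * D = J + J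
  have hJD : Jmat (p+1) * Dmat (p+1) = Jmat (p+1) + Jmat (p+1) := by
    ext u l
    rw [Matrix.mul_apply]
    simp only [Jmat, Dmat, of_apply, one_mul, Matrix.add_apply]
    have key : ∀ j : Fin (p+1), (if l = j ∨ l = j - 1 then (1:ℤ) else 0)
        = (if j = l then 1 else 0) + (if j = l + 1 then 1 else 0) := by
      intro j
      have h1 : (l = j - 1) ↔ (j = l + 1) := by
        rw [eq_sub_iff_add_eq, eq_comm]
      have h3 : (l = j) ↔ (j = l) := eq_comm
      simp only [h1, h3]
      by_cases c2 : j = l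
      · have : ¬ (j = l + 1) := by rw [c2]; exact hll l
        simp [c2, this] <;> omega
      · by_cases c3 : j = l + 1 <;> simp [c2, c3] <;> omega
    simp only [key, Finset.sum_add_distrib, Finset.sum_ite_eq', Finset.mem_univ, if_true]
  -- B * J = J
  have hBJ : Bmat (p+1) * Jmat (p+1) = Jmat (p+1) := by
    ext u l
    rw [Matrix.mul_apply]
    simp only [Bmat, Jmat, of_apply, mul_one]
    have key : ∀ j : Fin (p+1), (if u = j + 1 then (1:ℤ) else 0)
        = (if j = u - 1 then 1 else 0) := by
      intro j
      have : (u = j + 1) ↔ (j = u - 1) := by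
        rw [eq_comm, ← eq_sub_iff_add_eq]
      simp only [this]
    simp only [key, Finset.sum_ite_eq', Finset.mem_univ, if_true]
  -- det (1 - 2J) = 1 - 2k
  have hdet1 : ((1 : Matrix (Fin (p+1)) (Fin (p+1)) ℤ) - (Jmat (p+1) + Jmat (p+1))).det
      = 1 - 2 * ((p:ℤ)+1) := by
    have h : (1 : Matrix (Fin (p+1)) (Fin (p+1)) ℤ) - (Jmat (p+1) + Jmat (p+1))
        = 1 + replicateCol (Fin 1) (fun _ => (-2 : ℤ)) * replicateRow (Fin 1) (fun _ => (1 : ℤ)) := by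
      ext i j
      simp [Jmat, Matrix.mul_apply, Matrix.sub_apply, Matrix.add_apply]
      ring
    rw [h]; refine (det_one_add_replicateCol_mul_replicateRow (ι := Fin 1) (fun _ => (-2 : ℤ)) (fun _ => (1 : ℤ))).trans ?_
    simp [dotProduct]
    ring
  -- main computation
  have hmul : Tmat (p+1) * cartanIV (p+1)
      = fromBlocks 1 (Dmat (p+1)) (Jmat (p+1)) (Bmat (p+1)) := by
    rw [cartan_blocks, Tmat, fromBlocks_multiply]; simp
  have h1 : (-1 : ℤ)^(p+1) * (cartanIV (p+1)).det
      = (Bmat (p+1) - Jmat (p+1) * Dmat (p+1)).det := by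
    rw [← detT (p+1), ← det_mul, hmul, det_fromBlocks_one₁₁]
  have hfac : Bmat (p+1) - (Jmat (p+1) + Jmat (p+1))
      = Bmat (p+1) * (1 - (Jmat (p+1) + Jmat (p+1))) := by
    rw [Matrix.mul_sub, Matrix.mul_one, Matrix.mul_add, hBJ]
  rw [hJD, hfac, det_mul, detB p, hdet1] at h1
  rcases Nat.even_or_odd p with hp | hp
  · rw [hp.neg_one_pow, pow_succ, hp.neg_one_pow, one_mul] at h1
    push_cast at h1 ⊢
    linarith
  · rw [hp.neg_one_pow, pow_succ, hp.neg_one_pow] at h1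
    push_cast at h1 ⊢
    linarith
end

section
/- Let M be an n×n matrix over a commutative ring having three rows r_a, r_b, r_c (for distinct indices a, b, c) and suppose that after the row operation r_a ← r_a − r_b + r_c the new row r_a becomes 2·e_a (twice the standard basis vector at a) — i.e., r_a − r_b + r_c = 2·e_a — and moreover column b of M is zero except M_{ab} = M_{bb} = 1. Then det M = 2·det M', where M' is obtained from M by deleting rows a, b and columns a, b. -/
open Matrix

/-- If row `a` of `M` is zero off the diagonal, the determinant factors. -/
lemma aux_det_row {ι : Type*} [Fintype ι] [DecidableEq ι] {R : Type*} [CommRing R]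
    (M : Matrix ι ι R) (a : ι) (h : ∀ j, j ≠ a → M a j = 0) :
    M.det = M a a * (M.submatrix
      (fun i : {i : ι // i ≠ a} => (i : ι))
      (fun j : {j : ι // j ≠ a} => (j : ι))).det := by
  haveI : Unique {i : ι // i = a} := ⟨⟨⟨a, rfl⟩⟩, fun x => Subtype.ext x.2⟩
  let e : {i : ι // i = a} ⊕ {i : ι // ¬ i = a} ≃ ι := Equiv.sumCompl (· = a)
  rw [← Matrix.det_submatrix_equiv_self e M]
  have hblock : M.submatrix e e = Matrix.fromBlocks
      (Matrix.of fun (_ : {i : ι // i = a}) (_ : {i : ι // i = a}) => M a a) 0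
      (Matrix.of fun (i : {i : ι // ¬ i = a}) (_ : {i : ι // i = a}) => M i.1 a)
      (M.submatrix (fun i : {i : ι // ¬ i = a} => (i : ι))
        (fun j : {j : ι // ¬ j = a} => (j : ι))) := by
    ext i j
    cases i with
    | inl i =>
      cases j with
      | inl j => simp [e, i.2, j.2]
      | inr j => simp [e, i.2, h j.1 j.2]
    | inr i =>
      cases j with
      | inl j => simp [e, j.2]
      | inr j => simp [e]
  rw [hblock, Matrix.det_fromBlocks_zero₁₂, Matrix.det_unique]
  rfl

/-- If column `a` of `M` is zero off the diagonal, the determinant factors. -/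
lemma aux_det_col {ι : Type*} [Fintype ι] [DecidableEq ι] {R : Type*} [CommRing R]
    (M : Matrix ι ι R) (a : ι) (h : ∀ i, i ≠ a → M i a = 0) :
    M.det = M a a * (M.submatrix
      (fun i : {i : ι // i ≠ a} => (i : ι))
      (fun j : {j : ι // j ≠ a} => (j : ι))).det := by
  have := aux_det_row Mᵀ a (fun j hj => h j hj)
  rw [← Matrix.det_transpose M, this, Matrix.transpose_apply]
  congr 1
  rw [← Matrix.det_transpose (M.submatrix _ _), Matrix.transpose_submatrix]

theorem stmt_13 {R : Type*} [CommRing R] {n : ℕ} (hn : 3 ≤ n)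
    (M : Matrix (Fin n) (Fin n) R) (a b c : Fin n)
    (hab : a ≠ b) (hac : a ≠ c) (hbc : b ≠ c)
    (h1 : ∀ j, M a j - M b j + M c j = if j = a then 2 else 0)
    (h2 : ∀ i, i ≠ a → i ≠ b → M i b = 0)
    (h3 : M a b = 1) (h4 : M b b = 1) :
    M.det = 2 * (M.submatrix
      (fun i : {i : Fin n // i ≠ a ∧ i ≠ b} => (i : Fin n))
      (fun j : {j : Fin n // j ≠ a ∧ j ≠ b} => (j : Fin n))).det := by
  classical
  set f : Fin n → R := fun j => if j = a then 2 else 0 with hf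
  set N : Matrix (Fin n) (Fin n) R := M.updateRow a f with hN
  set M1 : Matrix (Fin n) (Fin n) R := M.updateRow a (M a + (-1 : R) • M b) with hM1
  -- Step 1: row operations don't change the determinant.
  have hkey : N = M1.updateRow a (M1 a + (1 : R) • M1 c) := by
    ext i j
    by_cases hi : i = a
    · subst hi
      have hca := Ne.symm hac
      simp only [hN, hM1, Matrix.updateRow_self, Matrix.updateRow_apply, hca, if_false,
        eq_self_iff_true, if_true, Pi.add_apply, Pi.smul_apply, smul_eq_mul, hf]
      linear_combination -(h1 j)
    · simp [hN, hM1, Matrix.updateRow_apply, hi]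
  have hdet1 : N.det = M.det := by
    rw [hkey, Matrix.det_updateRow_add_smul_self M1 hac (1 : R), hM1,
      Matrix.det_updateRow_add_smul_self M hab (-1 : R)]
  -- Step 2: expand along row `a` of `N`.
  have hrow : ∀ j, j ≠ a → N a j = 0 := by
    intro j hj
    simp [hN, hf, hj]
  have hNaa : N a a = 2 := by simp [hN, hf]
  rw [← hdet1, aux_det_row N a hrow, hNaa]
  congr 1
  -- Step 3: expand along column `b` of the minor `P`.
  set P : Matrix {i : Fin n // i ≠ a} {i : Fin n // i ≠ a} R :=
    N.submatrix (fun i : {i : Fin n // i ≠ a} => (i : Fin n))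
      (fun j : {j : Fin n // j ≠ a} => (j : Fin n)) with hP
  have hb' : b ≠ a := hab.symm
  set b' : {i : Fin n // i ≠ a} := ⟨b, hb'⟩ with hb'def
  have hcol : ∀ i, i ≠ b' → P i b' = 0 := by
    intro i hi
    have hib : (i : Fin n) ≠ b := fun h => hi (Subtype.ext h)
    simp [hP, hN, hb'def, Matrix.updateRow_apply, i.2, h2 i.1 i.2 hib]
  have hPbb : P b' b' = 1 := by
    simp [hP, hN, hb'def, Matrix.updateRow_apply, hb', h4]
  rw [aux_det_col P b' hcol, hPbb, one_mul]
  -- Step 4: identify the double minor with the submatrix in the statement.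
  let e : {i : {i : Fin n // i ≠ a} // i ≠ b'} ≃ {i : Fin n // i ≠ a ∧ i ≠ b} :=
    { toFun := fun i => ⟨i.1.1, i.1.2, fun h => i.2 (Subtype.ext h)⟩
      invFun := fun i => ⟨⟨i.1, i.2.1⟩, fun h => i.2.2 (congrArg Subtype.val h)⟩
      left_inv := fun i => rfl
      right_inv := fun i => rfl }
  rw [← Matrix.det_submatrix_equiv_self e]
  congr 1
  ext i j
  simp [hP, hN, e, Matrix.updateRow_apply, i.1.2]
end
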